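/- arXiv:1305.6208 — 3 statements merged into one kernel-verified Lean document; each statement's English description precedes it below -/
import Mathlib

section
/- Let (X,μ) be a nonatomic probability space, T a tree on X, q ∈ (0,1), and f, h, L real numbers with 0 < h ≤ f^q and L ≥ f. Set c = ω_q( ((1−q)L^q + q L^{q−1} f) / h ). Let φ_n : X → [0,∞) be measurable functions with ∫_X φ_n dμ = f and ∫_X φ_n^q dμ = h for every n. Then the following are equivalent: (i) lim_n ∫_X [max(M_T φ_n, L)]^q dμ = h·c; (ii) lim_n ∫_X | max(M_T φ_n, L) − c^{1/q} φ_n |^q dμ = 0. -/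
/-!
Write `G = max (M_T φ) L`. Integrating the weak-type estimate `λ μ{M_T φ > λ} ≤ ∫_{M_T φ > λ} φ`
against `q λ ^ (q - 2) dλ` over `λ > L` (Tonelli on both sides) gives
`(1 - q) ∫ G ^ q + q ∫ φ G ^ (q - 1) ≤ (1 - q) L ^ q + q L ^ (q - 1) f`.

Let `σ ≥ 1` solve `H_q(σ) = ((1 - q) L ^ q + q L ^ (q - 1) f) / h`, so that `c = σ ^ q`. The
tangent-line inequality `(σ φ) ^ q ≤ q G ^ (q - 1) σ φ + (1 - q) G ^ q` of the concave `t ↦ t ^ q`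
has a nonnegative defect, and by the inequality above its integral is bounded by an expression in
`∫ G ^ q` that vanishes at `∫ G ^ q = h c`. Strict concavity makes the defect control
`|G - σ φ| ^ q` up to `ε G ^ q`, which gives (i) ⇒ (ii). Conversely,
`|∫ G ^ q - h c| ≤ ∫ |G - σ φ| ^ q` because `t ↦ t ^ q` is subadditive.
-/

open MeasureTheory Filter Set

noncomputable section

/-- A tree on a probability space, as in the paper. -/
structure DTree (X : Type*) [MeasurableSpace X] (μ : Measure X) where
  mem : Set (Set X)
  child : Set X → Set (Set X)
  meas : ∀ I ∈ mem, MeasurableSet I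
  top_mem : Set.univ ∈ mem
  pos : ∀ I ∈ mem, 0 < μ I
  child_sub_mem : ∀ I ∈ mem, child I ⊆ mem
  child_countable : ∀ I ∈ mem, (child I).Countable
  child_two : ∀ I ∈ mem, ∃ J ∈ child I, ∃ K ∈ child I, J ≠ K
  child_sub : ∀ I ∈ mem, ∀ J ∈ child I, J ⊆ I
  child_disj : ∀ I ∈ mem, (child I).Pairwise Disjoint
  child_union : ∀ I ∈ mem, ⋃₀ child I = I
  generated : ∃ lvl : ℕ → Set (Set X),
    lvl 0 = {Set.univ} ∧
    (∀ m, lvl (m + 1) = ⋃ I ∈ lvl m, child I) ∧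
    mem = ⋃ m, lvl m ∧
    Tendsto (fun m => ⨆ I ∈ lvl m, μ I) atTop (nhds 0)

variable {X : Type*} [MeasurableSpace X]

/-- The average of `φ` over `I`. -/
def trAvg (μ : Measure X) (φ : X → ℝ) (I : Set X) : ℝ :=
  (μ I).toReal⁻¹ * ∫ x in I, φ x ∂μ

/-- The dyadic maximal operator associated with the tree `T`. -/
def trMax (μ : Measure X) (T : DTree X μ) (φ : X → ℝ) (x : X) : ℝ :=
  sSup {r : ℝ | ∃ I ∈ T.mem, x ∈ I ∧ r = trAvg μ (fun y => |φ y|) I}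

/-- The exceptional set `A_φ`. -/
def trBad (μ : Measure X) (T : DTree X μ) (φ : X → ℝ) : Set X :=
  {x | ∀ I ∈ T.mem, x ∈ I → trAvg μ φ I < trMax μ T φ x}

/-- `φ` is `T`-good if the exceptional set `A_φ` is null. -/
def TGood (μ : Measure X) (T : DTree X μ) (φ : X → ℝ) : Prop :=
  μ (trBad μ T φ) = 0

/-- The set `A(φ, I) = {x ∈ X \ A_φ : I_φ(x) = I}`, where `I_φ(x)` is the largest
element `I` of the tree with `x ∈ I` and `M_T φ x = Av_I(φ)`. -/
def trA (μ : Measure X) (T : DTree X μ) (φ : X → ℝ) (I : Set X) : Set X :=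
  {x | x ∉ trBad μ T φ ∧ I ∈ T.mem ∧ x ∈ I ∧ trMax μ T φ x = trAvg μ φ I ∧
    ∀ J ∈ T.mem, x ∈ J → trMax μ T φ x = trAvg μ φ J → J ⊆ I}

/-- The subtree `S_φ`. -/
def trS (μ : Measure X) (T : DTree X μ) (φ : X → ℝ) : Set (Set X) :=
  {I | I ∈ T.mem ∧ 0 < μ (trA μ T φ I)} ∪ {Set.univ}

/-- `J* = I` : `I` is the smallest element of `S_φ` properly containing `J`. -/
def IsStarOf (μ : Measure X) (T : DTree X μ) (φ : X → ℝ) (J I : Set X) : Prop :=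
  I ∈ trS μ T φ ∧ J ⊂ I ∧ ∀ K ∈ trS μ T φ, J ⊂ K → I ⊆ K

/-- `H_q(z) = (1-q) z^q + q z^(q-1)`. -/
def funH (q z : ℝ) : ℝ := (1 - q) * z ^ q + q * z ^ (q - 1)

/-- `ω_q(z) = (H_q⁻¹(z))^q`, with `H_q⁻¹` the inverse of `H_q : [1,∞) → [1,∞)`. -/
def funOmega (q z : ℝ) : ℝ := (Function.invFunOn (funH q) (Set.Ici 1) z) ^ q

/-- The constant `c = ω_q(((1-q)L^q + qL^(q-1)f)/h)`. -/
def bellC (q f h L : ℝ) : ℝ := funOmega q (((1 - q) * L ^ q + q * L ^ (q - 1) * f) / h)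

/-- An extremal sequence for the Bellman function of three variables. -/
def IsExtremal (μ : Measure X) (T : DTree X μ) (q f h L : ℝ) (φ : ℕ → X → ℝ) : Prop :=
  (∀ n x, 0 ≤ φ n x) ∧ (∀ n, Measurable (φ n)) ∧ (∀ n, Integrable (φ n) μ) ∧
  (∀ n, ∫ x, φ n x ∂μ = f) ∧ (∀ n, ∫ x, φ n x ^ q ∂μ = h) ∧
  Tendsto (fun n => ∫ x, (max (trMax μ T (φ n) x) L) ^ q ∂μ) atTop
    (nhds (bellC q f h L * h))

section AmGm

variable {q : ℝ}

/-- The defect in the tangent-line bound at `κ` for the concave function `t ↦ t ^ q`. -/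
def amgmGap (q κ r : ℝ) : ℝ := q * κ ^ (q - 1) * r + (1 - q) * κ ^ q - r ^ q

lemma amgmGap_one (w : ℝ) : amgmGap q 1 w = q * w + (1 - q) - w ^ q := by
  simp [amgmGap]

lemma amgmGap_eq_rpow_mul {κ r : ℝ} (hκ : 0 < κ) (hr : 0 ≤ r) :
    amgmGap q κ r = κ ^ q * amgmGap q 1 (r / κ) := by
  rw [amgmGap_one, Real.div_rpow hr hκ.le, amgmGap, Real.rpow_sub hκ, Real.rpow_one]
  field_simp

lemma amgmGap_one_nonneg (hq0 : 0 ≤ q) (hq1 : q ≤ 1) {w : ℝ} (hw : 0 ≤ w) :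
    0 ≤ amgmGap q 1 w := by
  have := rpow_one_add_le_one_add_mul_self (s := w - 1) (by linarith) hq0 hq1
  rw [add_sub_cancel] at this
  rw [amgmGap_one]
  linarith

lemma amgmGap_one_pos (hq0 : 0 < q) (hq1 : q < 1) {w : ℝ} (hw : 0 ≤ w) (hw1 : w ≠ 1) :
    0 < amgmGap q 1 w := by
  have := rpow_one_add_lt_one_add_mul_self (s := w - 1) (by linarith) (sub_ne_zero.2 hw1) hq0 hq1
  rw [add_sub_cancel] at this
  rw [amgmGap_one]
  linarith

lemma amgmGap_nonneg (hq0 : 0 ≤ q) (hq1 : q ≤ 1) {κ r : ℝ} (hκ : 0 < κ) (hr : 0 ≤ r) :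
    0 ≤ amgmGap q κ r := by
  rw [amgmGap_eq_rpow_mul hκ hr]
  exact mul_nonneg (by positivity) (amgmGap_one_nonneg hq0 hq1 (by positivity))

lemma rpow_le_mul_add_mul (hq0 : 0 ≤ q) (hq1 : q ≤ 1) {κ r : ℝ} (hκ : 0 < κ) (hr : 0 ≤ r) :
    r ^ q ≤ q * κ ^ (q - 1) * r + (1 - q) * κ ^ q := by
  have := amgmGap_nonneg hq0 hq1 hκ hr
  rw [amgmGap] at this
  linarith

lemma convexOn_amgmGap_one (hq0 : 0 ≤ q) (hq1 : q ≤ 1) : ConvexOn ℝ (Ici 0) (amgmGap q 1) := by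
  refine ((((LinearMap.mul ℝ ℝ q).convexOn (convex_Ici 0)).add_const (1 - q)).sub
    (Real.concaveOn_rpow hq0 hq1)).congr fun w _ => ?_
  simp [amgmGap_one]

lemma amgmGap_one_self : amgmGap q 1 1 = 0 := by
  simp [amgmGap_one]

/-- Convexity turns the positivity of the gap at `1 ± δ` into linear growth away from `1`. -/
lemma min_amgmGap_one_mul_le (hq0 : 0 ≤ q) (hq1 : q ≤ 1) {δ w : ℝ} (hδ : 0 < δ) (hδ1 : δ ≤ 1)
    (hw : 0 ≤ w) (hδw : δ ≤ |1 - w|) :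
    min (amgmGap q 1 (1 - δ)) (amgmGap q 1 (1 + δ)) * |1 - w| ≤ δ * amgmGap q 1 w := by
  have hconv := convexOn_amgmGap_one hq0 hq1
  have h1 : (1 : ℝ) ∈ Ici 0 := mem_Ici.2 zero_le_one
  rcases le_total 1 w with hw1 | hw1
  · rw [abs_of_nonpos (by linarith)] at hδw ⊢
    have := hconv.secant_mono h1 (by simp; linarith) (mem_Ici.2 hw) (by linarith) (by linarith)
      (by linarith : 1 + δ ≤ w)
    rw [amgmGap_one_self, sub_zero, sub_zero, add_sub_cancel_left,
      div_le_div_iff₀ hδ (by linarith)] at this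
    nlinarith [min_le_right (amgmGap q 1 (1 - δ)) (amgmGap q 1 (1 + δ))]
  · rw [abs_of_nonneg (by linarith)] at hδw ⊢
    have := hconv.secant_mono h1 (mem_Ici.2 hw) (by simp; linarith) (by linarith) (by linarith)
      (by linarith : w ≤ 1 - δ)
    rw [amgmGap_one_self, sub_zero, sub_zero, sub_sub_cancel_left, div_neg, le_neg,
      ← div_neg, neg_sub, div_le_div_iff₀ hδ (by linarith)] at this
    nlinarith [min_le_left (amgmGap q 1 (1 - δ)) (amgmGap q 1 (1 + δ))]

lemma rpow_le_div_of_le {δ t : ℝ} (hq0 : 0 ≤ q) (hq1 : q ≤ 1) (hδ : 0 < δ) (hδ1 : δ ≤ 1)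
    (hδt : δ ≤ t) : t ^ q ≤ t / δ := by
  have ht : t ≤ t / δ := le_div_self (by linarith) hδ hδ1
  rcases le_total t 1 with ht1 | ht1
  · exact (Real.rpow_le_one (by linarith) ht1 hq0).trans ((le_div_iff₀ hδ).2 (by linarith))
  · exact (Real.rpow_le_self_of_one_le ht1 hq1).trans ht

lemma exists_abs_one_sub_rpow_le (hq0 : 0 < q) (hq1 : q < 1) {ε : ℝ} (hε : 0 < ε) :
    ∃ C : ℝ, ∀ w, 0 ≤ w → |1 - w| ^ q ≤ ε + C * amgmGap q 1 w := by
  set δ := min (ε ^ q⁻¹) 1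
  have hδ : 0 < δ := lt_min (by positivity) one_pos
  have hδ1 : δ ≤ 1 := min_le_right _ _
  have hδε : δ ^ q ≤ ε := by
    calc δ ^ q ≤ (ε ^ q⁻¹) ^ q := Real.rpow_le_rpow hδ.le (min_le_left _ _) hq0.le
      _ = ε := Real.rpow_inv_rpow hε.le hq0.ne'
  set m := min (amgmGap q 1 (1 - δ)) (amgmGap q 1 (1 + δ))
  have hm : 0 < m := lt_min (amgmGap_one_pos hq0 hq1 (by linarith) (by linarith))
    (amgmGap_one_pos hq0 hq1 (by linarith) (by linarith))
  refine ⟨m⁻¹, fun w hw => ?_⟩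
  have hgap := amgmGap_one_nonneg hq0.le hq1.le hw
  rcases lt_or_ge |1 - w| δ with hnear | hfar
  · have : |1 - w| ^ q ≤ δ ^ q := Real.rpow_le_rpow (abs_nonneg _) hnear.le hq0.le
    nlinarith [inv_pos.2 hm]
  · have hlin := min_amgmGap_one_mul_le hq0.le hq1.le hδ hδ1 hw hfar
    calc |1 - w| ^ q ≤ |1 - w| / δ := rpow_le_div_of_le hq0.le hq1.le hδ hδ1 hfar
      _ ≤ m⁻¹ * amgmGap q 1 w := by
        rw [div_le_iff₀ hδ, ← div_eq_inv_mul, div_mul_eq_mul_div, le_div_iff₀ hm]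
        linarith
      _ ≤ ε + m⁻¹ * amgmGap q 1 w := le_add_of_nonneg_left hε.le

lemma exists_abs_sub_rpow_le (hq0 : 0 < q) (hq1 : q < 1) {ε : ℝ} (hε : 0 < ε) :
    ∃ C : ℝ, ∀ κ r, 0 < κ → 0 ≤ r → |κ - r| ^ q ≤ ε * κ ^ q + C * amgmGap q κ r := by
  obtain ⟨C, hC⟩ := exists_abs_one_sub_rpow_le hq0 hq1 hε
  refine ⟨C, fun κ r hκ hr => ?_⟩
  have hsplit : |κ - r| ^ q = κ ^ q * |1 - r / κ| ^ q := by
    rw [← Real.mul_rpow hκ.le (abs_nonneg _), ← abs_of_pos hκ, ← abs_mul, abs_of_pos hκ,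
      mul_one_sub, mul_div_cancel₀ _ hκ.ne']
  rw [hsplit, amgmGap_eq_rpow_mul hκ hr]
  nlinarith [hC (r / κ) (div_nonneg hr hκ.le), Real.rpow_nonneg hκ.le q]

lemma abs_rpow_sub_rpow_le (hq0 : 0 ≤ q) (hq1 : q ≤ 1) {a b : ℝ} (ha : 0 ≤ a) (hb : 0 ≤ b) :
    |a ^ q - b ^ q| ≤ |a - b| ^ q := by
  wlog hba : b ≤ a generalizing a b
  · rw [abs_sub_comm, abs_sub_comm a]
    exact this hb ha (le_of_not_ge hba)
  have := Real.rpow_add_le_add_rpow (sub_nonneg.2 hba) hb hq0 hq1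
  rw [sub_add_cancel] at this
  rw [abs_of_nonneg (sub_nonneg.2 (Real.rpow_le_rpow hb hba hq0)),
    abs_of_nonneg (sub_nonneg.2 hba)]
  linarith

lemma abs_sub_rpow_le_rpow_add_rpow (hq0 : 0 ≤ q) (hq1 : q ≤ 1) {a b : ℝ} (ha : 0 ≤ a)
    (hb : 0 ≤ b) : |a - b| ^ q ≤ a ^ q + b ^ q :=
  calc |a - b| ^ q ≤ (a + b) ^ q :=
        Real.rpow_le_rpow (abs_nonneg _) (abs_sub_le_iff.2 ⟨by linarith, by linarith⟩) hq0
    _ ≤ a ^ q + b ^ q := Real.rpow_add_le_add_rpow ha hb hq0 hq1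

end AmGm

section FunH

variable {q : ℝ}

lemma funH_one : funH q 1 = 1 := by
  simp [funH]

lemma continuousOn_funH : ContinuousOn (funH q) (Ici 1) := by
  intro z hz
  have hz0 : z ≠ 0 := (zero_lt_one.trans_le hz).ne'
  exact (((continuousAt_const.mul (Real.continuousAt_rpow_const _ _ (Or.inl hz0))).add
    (continuousAt_const.mul (Real.continuousAt_rpow_const _ _ (Or.inl hz0))))).continuousWithinAt

lemma tendsto_funH_atTop (hq0 : 0 < q) (hq1 : q < 1) : Tendsto (funH q) atTop atTop :=
  tendsto_atTop_mono' _
    ((eventually_ge_atTop 0).mono fun z hz => le_add_of_nonneg_right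
      (mul_nonneg hq0.le (Real.rpow_nonneg hz _)))
    ((tendsto_rpow_atTop hq0).const_mul_atTop (by linarith))

lemma funH_invFunOn (hq0 : 0 < q) (hq1 : q < 1) {z : ℝ} (hz : 1 ≤ z) :
    1 ≤ Function.invFunOn (funH q) (Ici 1) z ∧
      funH q (Function.invFunOn (funH q) (Ici 1) z) = z := by
  have hz' : z ∈ funH q '' Ici 1 :=
    intermediate_value_Ici continuousOn_funH (tendsto_funH_atTop hq0 hq1) (by rwa [funH_one])
  exact ⟨Function.invFunOn_mem hz', Function.invFunOn_eq hz'⟩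

end FunH

namespace DTree

variable {μ : Measure X} (T : DTree X μ)

def level : ℕ → Set (Set X)
  | 0 => {univ}
  | m + 1 => ⋃ I ∈ level m, T.child I

lemma mem_iff_exists_level {I : Set X} : I ∈ T.mem ↔ ∃ m, I ∈ T.level m := by
  obtain ⟨lvl, hl0, hls, hmem, -⟩ := T.generated
  have hlvl : lvl = T.level := funext fun m => by
    induction m with
    | zero => exact hl0
    | succ m ih => rw [hls, ih]; rfl
  rw [hmem, hlvl, mem_iUnion]

lemma level_subset_mem (m : ℕ) : T.level m ⊆ T.mem :=
  fun _ hI => T.mem_iff_exists_level.2 ⟨m, hI⟩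

lemma mem_level_succ {m : ℕ} {J : Set X} :
    J ∈ T.level (m + 1) ↔ ∃ I ∈ T.level m, J ∈ T.child I := by
  simp [level]

lemma countable_level (m : ℕ) : (T.level m).Countable := by
  induction m with
  | zero => exact countable_singleton _
  | succ m ih =>
    exact ih.biUnion fun I hI => T.child_countable I (T.level_subset_mem m hI)

lemma countable_mem : T.mem.Countable := by
  have : T.mem = ⋃ m, T.level m := by ext I; rw [mem_iff_exists_level, mem_iUnion]
  rw [this]
  exact countable_iUnion T.countable_level

lemma pairwise_disjoint_level (m : ℕ) : (T.level m).Pairwise Disjoint := by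
  induction m with
  | zero => exact pairwise_singleton _ _
  | succ m ih =>
    intro J₁ hJ₁ J₂ hJ₂ hne
    obtain ⟨I₁, hI₁, hJI₁⟩ := T.mem_level_succ.1 hJ₁
    obtain ⟨I₂, hI₂, hJI₂⟩ := T.mem_level_succ.1 hJ₂
    have hI₁' := T.level_subset_mem m hI₁
    have hI₂' := T.level_subset_mem m hI₂
    by_cases hI : I₁ = I₂
    · subst hI
      exact T.child_disj I₁ hI₁' hJI₁ hJI₂ hne
    · exact (ih hI₁ hI₂ hI).mono (T.child_sub I₁ hI₁' J₁ hJI₁) (T.child_sub I₂ hI₂' J₂ hJI₂)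

lemma exists_level_superset {m k : ℕ} (hmk : m ≤ k) {J : Set X} (hJ : J ∈ T.level k) :
    ∃ I ∈ T.level m, J ⊆ I := by
  induction k, hmk using Nat.le_induction generalizing J with
  | base => exact ⟨J, hJ, subset_rfl⟩
  | succ k _ ih =>
    obtain ⟨P, hP, hJP⟩ := T.mem_level_succ.1 hJ
    obtain ⟨I, hI, hPI⟩ := ih hP
    exact ⟨I, hI, (T.child_sub P (T.level_subset_mem k hP) J hJP).trans hPI⟩

lemma subset_or_disjoint_of_level_le {m k : ℕ} (hmk : m ≤ k) {I J : Set X}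
    (hI : I ∈ T.level m) (hJ : J ∈ T.level k) : J ⊆ I ∨ Disjoint I J := by
  obtain ⟨I', hI', hJI'⟩ := T.exists_level_superset hmk hJ
  by_cases h : I = I'
  · exact Or.inl (h ▸ hJI')
  · exact Or.inr ((T.pairwise_disjoint_level m hI hI' h).mono_right hJI')

lemma subset_or_subset_or_disjoint {I J : Set X} (hI : I ∈ T.mem) (hJ : J ∈ T.mem) :
    I ⊆ J ∨ J ⊆ I ∨ Disjoint I J := by
  obtain ⟨m, hm⟩ := T.mem_iff_exists_level.1 hI
  obtain ⟨k, hk⟩ := T.mem_iff_exists_level.1 hJ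
  rcases le_total m k with hmk | hkm
  · rcases T.subset_or_disjoint_of_level_le hmk hm hk with h | h
    · exact Or.inr (Or.inl h)
    · exact Or.inr (Or.inr h)
  · rcases T.subset_or_disjoint_of_level_le hkm hk hm with h | h
    · exact Or.inl h
    · exact Or.inr (Or.inr h.symm)

lemma level_lt_of_ssubset {m k : ℕ} {J K : Set X} (hJ : J ∈ T.level m) (hK : K ∈ T.level k)
    (hJK : J ⊂ K) : k < m := by
  by_contra! hmk
  rcases T.subset_or_disjoint_of_level_le hmk hJ hK with hKJ | hdisj
  · exact hJK.2 hKJ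
  · have hJ0 : J = ∅ := disjoint_self.1 (hdisj.mono_right hJK.1)
    have := T.pos J (T.level_subset_mem m hJ)
    simp [hJ0] at this

/-- Strict supersets lie on strictly lower levels, so each element of a subfamily lies below a
maximal one. -/
lemma exists_maximal_superset {F : Set (Set X)} (hF : F ⊆ T.mem) {I : Set X} (hI : I ∈ F) :
    ∃ J ∈ F, I ⊆ J ∧ ∀ K ∈ F, ¬J ⊂ K := by
  classical
  have hex : ∃ m, ∃ J ∈ T.level m, J ∈ F ∧ I ⊆ J := by
    obtain ⟨m, hm⟩ := T.mem_iff_exists_level.1 (hF hI)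
    exact ⟨m, I, hm, hI, subset_rfl⟩
  obtain ⟨J, hJ, hJF, hIJ⟩ := Nat.find_spec hex
  refine ⟨J, hJF, hIJ, fun K hKF hJK => ?_⟩
  obtain ⟨k, hk⟩ := T.mem_iff_exists_level.1 (hF hKF)
  exact Nat.find_min hex (T.level_lt_of_ssubset hJ hk hJK) ⟨K, hk, hKF, hIJ.trans hJK.1⟩

lemma exists_countable_pairwise_disjoint_sUnion_eq {F : Set (Set X)} (hF : F ⊆ T.mem) :
    ∃ M ⊆ F, M.Countable ∧ M.Pairwise Disjoint ∧ ⋃₀ M = ⋃₀ F := by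
  refine ⟨{J | J ∈ F ∧ ∀ K ∈ F, ¬J ⊂ K}, fun J hJ => hJ.1,
    T.countable_mem.mono fun J hJ => hF hJ.1, ?_, ?_⟩
  · intro J₁ hJ₁ J₂ hJ₂ hne
    rcases T.subset_or_subset_or_disjoint (hF hJ₁.1) (hF hJ₂.1) with h | h | h
    · exact absurd (ssubset_iff_subset_ne.2 ⟨h, hne⟩) (hJ₁.2 J₂ hJ₂.1)
    · exact absurd (ssubset_iff_subset_ne.2 ⟨h, hne.symm⟩) (hJ₂.2 J₁ hJ₁.1)
    · exact h
  · refine (sUnion_mono fun J hJ => hJ.1).antisymm fun x hx => ?_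
    obtain ⟨I, hIF, hxI⟩ := mem_sUnion.1 hx
    obtain ⟨J, hJF, hIJ, hJmax⟩ := T.exists_maximal_superset hF hIF
    exact mem_sUnion.2 ⟨J, ⟨hJF, hJmax⟩, hIJ hxI⟩

end DTree

section MaximalOperator

variable {μ : Measure X} (T : DTree X μ) {φ : X → ℝ}

lemma trMax_eq_sSup (hφ0 : ∀ x, 0 ≤ φ x) (x : X) :
    trMax μ T φ x = sSup {r | ∃ I ∈ T.mem, x ∈ I ∧ r = trAvg μ φ I} := by
  simp_rw [trMax, abs_of_nonneg (hφ0 _)]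

/-- `trMax` is a supremum over the countable tree: `X` itself stands in for the elements that
do not contain `x`. -/
lemma measurable_trMax (φ : X → ℝ) : Measurable (trMax μ T φ) := by
  classical
  have : Countable T.mem := T.countable_mem.to_subtype
  have heq : trMax μ T φ = fun x => ⨆ I : T.mem,
      if x ∈ (I : Set X) then trAvg μ (fun y => |φ y|) I else trAvg μ (fun y => |φ y|) univ := by
    funext x
    rw [trMax, iSup]
    congr 1
    ext r
    constructor
    · rintro ⟨I, hI, hxI, rfl⟩
      exact ⟨⟨I, hI⟩, if_pos hxI⟩
    · rintro ⟨⟨I, hI⟩, rfl⟩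
      by_cases hxI : x ∈ I
      · exact ⟨I, hI, hxI, if_pos hxI⟩
      · exact ⟨univ, T.top_mem, mem_univ x, if_neg hxI⟩
  rw [heq]
  exact Measurable.iSup fun I => Measurable.ite (T.meas I I.2) measurable_const measurable_const

lemma exists_lt_trAvg_of_lt_trMax (hφ0 : ∀ x, 0 ≤ φ x) {x : X} {lam : ℝ}
    (hlt : lam < trMax μ T φ x) : ∃ I ∈ T.mem, x ∈ I ∧ lam < trAvg μ φ I := by
  have hne : {r | ∃ I ∈ T.mem, x ∈ I ∧ r = trAvg μ φ I}.Nonempty :=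
    ⟨_, univ, T.top_mem, mem_univ x, rfl⟩
  rw [trMax_eq_sSup T hφ0] at hlt
  obtain ⟨r, ⟨I, hI, hxI, rfl⟩, hlr⟩ := exists_lt_of_lt_csSup hne hlt
  exact ⟨I, hI, hxI, hlr⟩

lemma ofReal_mul_measure_le_setLIntegral [IsFiniteMeasure μ] {I : Set X} (hφ0 : ∀ x, 0 ≤ φ x)
    (hφi : IntegrableOn φ I μ) {lam : ℝ} (hlam : 0 ≤ lam) (hlt : lam < trAvg μ φ I) :
    ENNReal.ofReal lam * μ I ≤ ∫⁻ x in I, ENNReal.ofReal (φ x) ∂μ := by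
  have hpos : 0 < (μ I).toReal := by
    by_contra! h0
    simp [trAvg, le_antisymm h0 ENNReal.toReal_nonneg] at hlt
    linarith
  rw [← ofReal_integral_eq_lintegral_ofReal hφi (Eventually.of_forall hφ0),
    ← ENNReal.ofReal_toReal (measure_ne_top μ I), ← ENNReal.ofReal_mul hlam]
  refine ENNReal.ofReal_le_ofReal ?_
  rw [trAvg, ← div_eq_inv_mul, lt_div_iff₀ hpos] at hlt
  exact hlt.le

/-- The maximal elements of the tree with average `> λ` are disjoint and cover the same set. -/
lemma ofReal_mul_measure_sUnion_le [IsFiniteMeasure μ] (hφ0 : ∀ x, 0 ≤ φ x)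
    (hφi : Integrable φ μ) {lam : ℝ} (hlam : 0 ≤ lam) :
    ENNReal.ofReal lam * μ (⋃₀ {I | I ∈ T.mem ∧ lam < trAvg μ φ I}) ≤
      ∫⁻ x in ⋃₀ {I | I ∈ T.mem ∧ lam < trAvg μ φ I}, ENNReal.ofReal (φ x) ∂μ := by
  obtain ⟨M, hMF, hMc, hMd, hMU⟩ :=
    T.exists_countable_pairwise_disjoint_sUnion_eq (F := {I | I ∈ T.mem ∧ lam < trAvg μ φ I})
      fun I hI => hI.1
  have hMm : ∀ I ∈ M, MeasurableSet I := fun I hI => T.meas I (hMF hI).1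
  rw [← hMU, measure_sUnion hMc hMd hMm, sUnion_eq_biUnion,
    lintegral_biUnion hMc hMm hMd, ← ENNReal.tsum_mul_left]
  exact ENNReal.tsum_le_tsum fun I =>
    ofReal_mul_measure_le_setLIntegral hφ0 hφi.integrableOn hlam (hMF I.2).2

lemma ae_bddAbove_trAvg [IsFiniteMeasure μ] (hφ0 : ∀ x, 0 ≤ φ x) (hφi : Integrable φ μ) :
    ∀ᵐ x ∂μ, BddAbove {r | ∃ I ∈ T.mem, x ∈ I ∧ r = trAvg μ φ I} := by
  set N := {x | ¬BddAbove {r | ∃ I ∈ T.mem, x ∈ I ∧ r = trAvg μ φ I}}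
  change μ N = 0
  by_contra hN
  have hfin : ∫⁻ x, ENNReal.ofReal (φ x) ∂μ ≠ ⊤ :=
    (hasFiniteIntegral_iff_ofReal (Eventually.of_forall hφ0)).1 hφi.2 |>.ne
  obtain ⟨n, hn⟩ := ENNReal.exists_nat_mul_gt hN hfin
  have hNU : N ⊆ ⋃₀ {I | I ∈ T.mem ∧ (n : ℝ) < trAvg μ φ I} := fun x hx => by
    obtain ⟨r, ⟨I, hI, hxI, rfl⟩, hr⟩ := not_bddAbove_iff.1 hx n
    exact ⟨I, ⟨hI, hr⟩, hxI⟩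
  refine hn.not_ge ?_
  calc (n : ENNReal) * μ N
      ≤ ENNReal.ofReal n * μ (⋃₀ {I | I ∈ T.mem ∧ (n : ℝ) < trAvg μ φ I}) := by
        rw [ENNReal.ofReal_natCast]
        exact mul_le_mul_right (measure_mono hNU) _
    _ ≤ _ := ofReal_mul_measure_sUnion_le T hφ0 hφi n.cast_nonneg
    _ ≤ _ := setLIntegral_le_lintegral _ _

lemma ofReal_mul_measure_lt_trMax_le [IsFiniteMeasure μ] (hφ0 : ∀ x, 0 ≤ φ x)
    (hφi : Integrable φ μ) {lam : ℝ} (hlam : 0 ≤ lam) :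
    ENNReal.ofReal lam * μ {x | lam < trMax μ T φ x} ≤
      ∫⁻ x in {x | lam < trMax μ T φ x}, ENNReal.ofReal (φ x) ∂μ := by
  set U := ⋃₀ {I | I ∈ T.mem ∧ lam < trAvg μ φ I}
  have hEU : {x | lam < trMax μ T φ x} ⊆ U := fun x hx => by
    obtain ⟨I, hI, hxI, hlt⟩ := exists_lt_trAvg_of_lt_trMax T hφ0 hx
    exact ⟨I, ⟨hI, hlt⟩, hxI⟩
  have hUE : U =ᵐ[μ] {x | lam < trMax μ T φ x} := by
    refine ae_eq_set.2 ⟨measure_mono_null (fun x hx => ?_) (ae_bddAbove_trAvg T hφ0 hφi),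
      by simp [sdiff_eq_empty.2 hEU]⟩
    obtain ⟨⟨I, ⟨hI, hlt⟩, hxI⟩, hxE⟩ := hx
    intro hbdd
    change ¬lam < trMax μ T φ x at hxE
    rw [trMax_eq_sSup T hφ0] at hxE
    exact hxE (hlt.trans_le (le_csSup hbdd ⟨I, hI, hxI, rfl⟩))
  calc ENNReal.ofReal lam * μ {x | lam < trMax μ T φ x} ≤ ENNReal.ofReal lam * μ U :=
        mul_le_mul_right (measure_mono hEU) _
    _ ≤ ∫⁻ x in U, ENNReal.ofReal (φ x) ∂μ := ofReal_mul_measure_sUnion_le T hφ0 hφi hlam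
    _ = _ := setLIntegral_congr hUE

end MaximalOperator

section LayerCake

lemma lintegral_Ioo_ofReal_mul_rpow {a b c r : ℝ} (ha : 0 < a) (hab : a ≤ b) (hc : 0 ≤ c)
    (hr : r ≠ -1) :
    ∫⁻ t in Ioo a b, ENNReal.ofReal (c * t ^ r) =
      ENNReal.ofReal (c * ((b ^ (r + 1) - a ^ (r + 1)) / (r + 1))) := by
  have h0 : (0 : ℝ) ∉ uIcc a b := by
    rw [uIcc_of_le hab]
    exact fun h => h.1.not_gt ha
  have hint : IntervalIntegrable (fun t => c * t ^ r) volume a b :=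
    (intervalIntegral.intervalIntegrable_rpow (Or.inr h0)).const_mul c
  have hnn : 0 ≤ᵐ[volume.restrict (Ioo a b)] fun t => c * t ^ r := by
    filter_upwards [ae_restrict_mem measurableSet_Ioo] with t ht
    exact mul_nonneg hc (Real.rpow_nonneg (ha.trans ht.1).le r)
  rw [← ofReal_integral_eq_lintegral_ofReal (hint.1.mono_set Ioo_subset_Ioc_self) hnn,
    ← integral_Ioc_eq_integral_Ioo, ← intervalIntegral.integral_of_le hab,
    intervalIntegral.integral_const_mul, integral_rpow (Or.inr ⟨hr, h0⟩)]

variable {μ : Measure X}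

/-- Tonelli's theorem on the region `{(x, t) : L < t < G x}`. -/
lemma lintegral_mul_lintegral_Ioo_eq [SFinite μ] {ρ : X → ENNReal} {w : ℝ → ENNReal}
    {G : X → ℝ} (hρ : Measurable ρ) (hw : Measurable w) (hG : Measurable G) (L : ℝ) :
    ∫⁻ x, ρ x * (∫⁻ t in Ioo L (G x), w t) ∂μ =
      ∫⁻ t in Ioi L, w t * ∫⁻ x in {x | t < G x}, ρ x ∂μ := by
  set S : Set (X × ℝ) := {p | L < p.2 ∧ p.2 < G p.1}
  set F : X × ℝ → ENNReal := S.indicator fun p => ρ p.1 * w p.2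
  have hF : Measurable F := ((hρ.comp measurable_fst).mul (hw.comp measurable_snd)).indicator
    ((measurableSet_lt measurable_const measurable_snd).inter
      (measurableSet_lt measurable_snd (hG.comp measurable_fst)))
  have hsec₁ : ∀ x, ρ x * (∫⁻ t in Ioo L (G x), w t) = ∫⁻ t, F (x, t) := fun x => by
    rw [← lintegral_const_mul _ hw, ← lintegral_indicator measurableSet_Ioo]
    rfl
  have hsec₂ : ∀ t, ∫⁻ x, F (x, t) ∂μ =
      (Ioi L).indicator (fun t => w t * ∫⁻ x in {x | t < G x}, ρ x ∂μ) t := fun t => by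
    by_cases ht : L < t
    · rw [indicator_of_mem (mem_Ioi.2 ht), ← lintegral_const_mul _ hρ,
        ← lintegral_indicator (measurableSet_lt measurable_const hG)]
      congr 1 with x
      by_cases hx : t < G x <;> simp [F, S, ht, hx, mul_comm]
    · simp [F, S, ht, indicator_of_notMem]
  calc ∫⁻ x, ρ x * (∫⁻ t in Ioo L (G x), w t) ∂μ = ∫⁻ x, (∫⁻ t, F (x, t)) ∂μ :=
        lintegral_congr hsec₁
    _ = ∫⁻ t, ∫⁻ x, F (x, t) ∂μ :=
        lintegral_lintegral_swap (f := fun x t => F (x, t)) hF.aemeasurable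
    _ = _ := by rw [lintegral_congr hsec₂, lintegral_indicator measurableSet_Ioi]

lemma integrable_of_lintegral_ofReal_le {f g : X → ℝ} (hf0 : ∀ x, 0 ≤ f x)
    (hf : AEStronglyMeasurable f μ) (hg : Integrable g μ)
    (h : ∫⁻ x, ENNReal.ofReal (f x) ∂μ ≤ ∫⁻ x, ENNReal.ofReal (g x) ∂μ) : Integrable f μ :=
  ⟨hf, (hasFiniteIntegral_iff_ofReal (ae_of_all _ hf0)).2 (h.trans_lt hg.lintegral_lt_top)⟩

lemma integral_le_of_lintegral_ofReal_le {f g : X → ℝ} (hf0 : ∀ x, 0 ≤ f x)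
    (hf : AEStronglyMeasurable f μ) (hg0 : ∀ x, 0 ≤ g x) (hg : Integrable g μ)
    (h : ∫⁻ x, ENNReal.ofReal (f x) ∂μ ≤ ∫⁻ x, ENNReal.ofReal (g x) ∂μ) :
    ∫ x, f x ∂μ ≤ ∫ x, g x ∂μ := by
  rw [integral_eq_lintegral_of_nonneg_ae (ae_of_all _ hf0) hf,
    integral_eq_lintegral_of_nonneg_ae (ae_of_all _ hg0) hg.1]
  exact ENNReal.toReal_mono hg.lintegral_lt_top.ne h

lemma integrable_rpow_of_nonneg [IsFiniteMeasure μ] {φ : X → ℝ} {q : ℝ} (hq0 : 0 ≤ q)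
    (hq1 : q ≤ 1) (hφm : Measurable φ) (hφ0 : ∀ x, 0 ≤ φ x) (hφi : Integrable φ μ) :
    Integrable (fun x => φ x ^ q) μ := by
  refine ((hφi.const_mul q).add (integrable_const (1 - q))).mono'
    (hφm.pow_const q).aestronglyMeasurable (ae_of_all _ fun x => ?_)
  have := rpow_le_mul_add_mul hq0 hq1 one_pos (hφ0 x)
  rw [Real.one_rpow, Real.one_rpow, mul_one, mul_one] at this
  rw [Real.norm_of_nonneg (Real.rpow_nonneg (hφ0 x) q)]
  exact this

end LayerCake

section KeyInequality

variable {μ : Measure X} (T : DTree X μ) {φ : X → ℝ} {q L : ℝ}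

/-- Integrating the weak-type estimate against `q t ^ (q - 2) dt` over `t > L`: both sides are
written as layer-cake integrals, by Tonelli. -/
lemma lintegral_max_trMax_rpow_sub_le [IsFiniteMeasure μ] (hq0 : 0 < q) (hq1 : q < 1) (hL : 0 < L)
    (hφm : Measurable φ) (hφ0 : ∀ x, 0 ≤ φ x) (hφi : Integrable φ μ) :
    ∫⁻ x, ENNReal.ofReal (max (trMax μ T φ x) L ^ q - L ^ q) ∂μ ≤
      ∫⁻ x, ENNReal.ofReal
        (q / (1 - q) * (L ^ (q - 1) * φ x - φ x * max (trMax μ T φ x) L ^ (q - 1))) ∂μ := by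
  set G := fun x => max (trMax μ T φ x) L
  have hG : Measurable G := (measurable_trMax T φ).max measurable_const
  have hGL : ∀ x, L ≤ G x := fun x => le_max_right _ _
  have hlhs : ∀ x, ENNReal.ofReal (G x ^ q - L ^ q) =
      1 * ∫⁻ t in Ioo L (G x), ENNReal.ofReal (q * t ^ (q - 1)) := fun x => by
    rw [one_mul, lintegral_Ioo_ofReal_mul_rpow hL (hGL x) hq0.le (by linarith), sub_add_cancel]
    field_simp
  have hrhs : ∀ x, ENNReal.ofReal (q / (1 - q) * (L ^ (q - 1) * φ x - φ x * G x ^ (q - 1))) =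
      ENNReal.ofReal (φ x) * ∫⁻ t in Ioo L (G x), ENNReal.ofReal (q * t ^ (q - 2)) := fun x => by
    rw [lintegral_Ioo_ofReal_mul_rpow hL (hGL x) hq0.le (by linarith), ← ENNReal.ofReal_mul (hφ0 x),
      show q - 2 + 1 = q - 1 by ring]
    have : 1 - q ≠ 0 := by linarith
    have : q - 1 ≠ 0 := by linarith
    congr 1
    field_simp
    ring
  have hweak : ∀ t ∈ Ioi L,
      ENNReal.ofReal (q * t ^ (q - 1)) * ∫⁻ x in {x | t < G x}, 1 ∂μ ≤
        ENNReal.ofReal (q * t ^ (q - 2)) * ∫⁻ x in {x | t < G x}, ENNReal.ofReal (φ x) ∂μ := by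
    intro t (ht : L < t)
    have ht0 : 0 < t := hL.trans ht
    have hset : {x | t < G x} = {x | t < trMax μ T φ x} := by
      ext x
      simp only [G, mem_ofPred_eq, lt_max_iff, or_iff_left ht.not_gt]
    have hsplit : ENNReal.ofReal (q * t ^ (q - 1)) =
        ENNReal.ofReal (q * t ^ (q - 2)) * ENNReal.ofReal t := by
      rw [← ENNReal.ofReal_mul (by positivity), mul_assoc, ← Real.rpow_add_one ht0.ne']
      ring_nf
    rw [setLIntegral_one, hset, hsplit, mul_assoc]
    gcongr
    exact ofReal_mul_measure_lt_trMax_le T hφ0 hφi ht0.le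
  calc ∫⁻ x, ENNReal.ofReal (G x ^ q - L ^ q) ∂μ
      = ∫⁻ x, 1 * (∫⁻ t in Ioo L (G x), ENNReal.ofReal (q * t ^ (q - 1))) ∂μ :=
        lintegral_congr hlhs
    _ = ∫⁻ t in Ioi L, ENNReal.ofReal (q * t ^ (q - 1)) * ∫⁻ x in {x | t < G x}, 1 ∂μ :=
        lintegral_mul_lintegral_Ioo_eq measurable_const (by fun_prop) hG L
    _ ≤ ∫⁻ t in Ioi L, ENNReal.ofReal (q * t ^ (q - 2)) *
          ∫⁻ x in {x | t < G x}, ENNReal.ofReal (φ x) ∂μ :=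
        setLIntegral_mono' measurableSet_Ioi hweak
    _ = ∫⁻ x, ENNReal.ofReal (φ x) * (∫⁻ t in Ioo L (G x), ENNReal.ofReal (q * t ^ (q - 2))) ∂μ :=
        (lintegral_mul_lintegral_Ioo_eq hφm.ennreal_ofReal (by fun_prop) hG L).symm
    _ = _ := lintegral_congr fun x => (hrhs x).symm

lemma integrable_mul_max_trMax_rpow (hq1 : q ≤ 1) (hL : 0 < L) (hφi : Integrable φ μ) :
    Integrable (fun x => φ x * max (trMax μ T φ x) L ^ (q - 1)) μ := by
  refine hφi.mul_bdd (c := L ^ (q - 1))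
    (((measurable_trMax T φ).max measurable_const).pow_const _).aestronglyMeasurable
    (ae_of_all _ fun x => ?_)
  have hG : 0 < max (trMax μ T φ x) L := hL.trans_le (le_max_right _ _)
  rw [Real.norm_of_nonneg (Real.rpow_nonneg hG.le _)]
  exact Real.rpow_le_rpow_of_nonpos hL (le_max_right _ _) (by linarith)

lemma integrable_max_trMax_rpow [IsFiniteMeasure μ] (hq0 : 0 < q) (hq1 : q < 1) (hL : 0 < L)
    (hφm : Measurable φ) (hφ0 : ∀ x, 0 ≤ φ x) (hφi : Integrable φ μ) :
    Integrable (fun x => max (trMax μ T φ x) L ^ q) μ := by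
  have hsub := integrable_of_lintegral_ofReal_le
    (fun x => sub_nonneg.2 (Real.rpow_le_rpow hL.le (le_max_right (trMax μ T φ x) L) hq0.le))
    ((((measurable_trMax T φ).max measurable_const).pow_const q).sub
      measurable_const).aestronglyMeasurable
    (((hφi.const_mul _).sub (integrable_mul_max_trMax_rpow T hq1.le hL hφi)).const_mul _)
    (lintegral_max_trMax_rpow_sub_le T hq0 hq1 hL hφm hφ0 hφi)
  exact (hsub.add (integrable_const (L ^ q))).congr (ae_of_all _ fun x => sub_add_cancel _ _)

lemma integral_max_trMax_rpow_le [IsProbabilityMeasure μ] (hq0 : 0 < q) (hq1 : q < 1)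
    (hL : 0 < L) (hφm : Measurable φ) (hφ0 : ∀ x, 0 ≤ φ x) (hφi : Integrable φ μ) :
    (1 - q) * ∫ x, max (trMax μ T φ x) L ^ q ∂μ +
        q * ∫ x, φ x * max (trMax μ T φ x) L ^ (q - 1) ∂μ ≤
      (1 - q) * L ^ q + q * L ^ (q - 1) * ∫ x, φ x ∂μ := by
  have hIG := integrable_max_trMax_rpow T hq0 hq1 hL hφm hφ0 hφi
  have hIP := integrable_mul_max_trMax_rpow T hq1.le hL hφi
  have hGL : ∀ x, max (trMax μ T φ x) L ^ (q - 1) ≤ L ^ (q - 1) := fun x =>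
    Real.rpow_le_rpow_of_nonpos hL (le_max_right _ _) (by linarith)
  have h := integral_le_of_lintegral_ofReal_le (f := fun x => max (trMax μ T φ x) L ^ q - L ^ q)
    (g := fun x => q / (1 - q) * (L ^ (q - 1) * φ x - φ x * max (trMax μ T φ x) L ^ (q - 1)))
    (fun x => sub_nonneg.2 (Real.rpow_le_rpow hL.le (le_max_right (trMax μ T φ x) L) hq0.le))
    (hIG.sub (integrable_const _)).1
    (fun x => mul_nonneg (div_nonneg hq0.le (by linarith))
      (by nlinarith [hφ0 x, hGL x, mul_comm (φ x) (L ^ (q - 1))]))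
    (((hφi.const_mul _).sub hIP).const_mul _)
    (lintegral_max_trMax_rpow_sub_le T hq0 hq1 hL hφm hφ0 hφi)
  rw [integral_sub hIG (integrable_const _), integral_const, integral_const_mul,
    integral_sub (hφi.const_mul _) hIP, integral_const_mul, probReal_univ, one_smul] at h
  have h1q : 0 < 1 - q := by linarith
  have := mul_le_mul_of_nonneg_left h h1q.le
  rw [← mul_assoc, mul_div_cancel₀ _ h1q.ne'] at this
  linarith

end KeyInequality

section Extremal

variable {μ : Measure X} (T : DTree X μ) {φ : X → ℝ} {q L σ : ℝ}

lemma integrable_abs_max_trMax_sub_rpow [IsFiniteMeasure μ] (hq0 : 0 < q) (hq1 : q < 1)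
    (hL : 0 < L) (hσ : 0 ≤ σ) (hφm : Measurable φ) (hφ0 : ∀ x, 0 ≤ φ x) (hφi : Integrable φ μ) :
    Integrable (fun x => |max (trMax μ T φ x) L - σ * φ x| ^ q) μ := by
  refine ((integrable_max_trMax_rpow T hq0 hq1 hL hφm hφ0 hφi).add
    ((integrable_rpow_of_nonneg hq0.le hq1.le hφm hφ0 hφi).const_mul (σ ^ q))).mono'
    ((((measurable_trMax T φ).max measurable_const).sub (hφm.const_mul σ)).abs.pow_const
      q).aestronglyMeasurable (ae_of_all _ fun x => ?_)
  rw [Real.norm_of_nonneg (by positivity), Pi.add_apply, ← Real.mul_rpow hσ (hφ0 x)]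
  exact abs_sub_rpow_le_rpow_add_rpow hq0.le hq1.le (hL.le.trans (le_max_right _ _))
    (mul_nonneg hσ (hφ0 x))

lemma abs_integral_max_trMax_rpow_sub_le [IsFiniteMeasure μ] (hq0 : 0 < q) (hq1 : q < 1)
    (hL : 0 < L) (hσ : 0 ≤ σ) (hφm : Measurable φ) (hφ0 : ∀ x, 0 ≤ φ x)
    (hφi : Integrable φ μ) :
    |∫ x, max (trMax μ T φ x) L ^ q ∂μ - σ ^ q * ∫ x, φ x ^ q ∂μ| ≤
      ∫ x, |max (trMax μ T φ x) L - σ * φ x| ^ q ∂μ := by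
  have hIφ := (integrable_rpow_of_nonneg hq0.le hq1.le hφm hφ0 hφi).const_mul (σ ^ q)
  rw [← integral_const_mul, ← integral_sub (integrable_max_trMax_rpow T hq0 hq1 hL hφm hφ0 hφi) hIφ]
  refine abs_integral_le_integral_abs.trans
    (integral_mono_of_nonneg (ae_of_all _ fun x => abs_nonneg _)
      (integrable_abs_max_trMax_sub_rpow T hq0 hq1 hL hσ hφm hφ0 hφi) (ae_of_all _ fun x => ?_))
  dsimp only
  rw [← Real.mul_rpow hσ (hφ0 x)]
  exact abs_rpow_sub_rpow_le hq0.le hq1.le (hL.le.trans (le_max_right _ _)) (mul_nonneg hσ (hφ0 x))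

lemma amgmGap_max_trMax_eq (hσ : 0 ≤ σ) (hφ0 : ∀ x, 0 ≤ φ x) :
    (fun x => amgmGap q (max (trMax μ T φ x) L) (σ * φ x)) = fun x =>
      q * σ * (φ x * max (trMax μ T φ x) L ^ (q - 1)) + (1 - q) * max (trMax μ T φ x) L ^ q -
        σ ^ q * φ x ^ q := by
  funext x
  rw [amgmGap, Real.mul_rpow hσ (hφ0 x)]
  ring

lemma integrable_amgmGap_max_trMax [IsFiniteMeasure μ] (hq0 : 0 < q) (hq1 : q < 1) (hL : 0 < L)
    (hσ : 0 ≤ σ) (hφm : Measurable φ) (hφ0 : ∀ x, 0 ≤ φ x) (hφi : Integrable φ μ) :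
    Integrable (fun x => amgmGap q (max (trMax μ T φ x) L) (σ * φ x)) μ := by
  rw [amgmGap_max_trMax_eq T hσ hφ0]
  exact (((integrable_mul_max_trMax_rpow T hq1.le hL hφi).const_mul _).add
    ((integrable_max_trMax_rpow T hq0 hq1 hL hφm hφ0 hφi).const_mul _)).sub
    ((integrable_rpow_of_nonneg hq0.le hq1.le hφm hφ0 hφi).const_mul _)

lemma integral_amgmGap_max_trMax_le [IsProbabilityMeasure μ] (hq0 : 0 < q) (hq1 : q < 1)
    (hL : 0 < L) (hσ : 0 ≤ σ) (hφm : Measurable φ) (hφ0 : ∀ x, 0 ≤ φ x) (hφi : Integrable φ μ) :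
    ∫ x, amgmGap q (max (trMax μ T φ x) L) (σ * φ x) ∂μ ≤
      σ * ((1 - q) * L ^ q + q * L ^ (q - 1) * (∫ x, φ x ∂μ) -
          (1 - q) * ∫ x, max (trMax μ T φ x) L ^ q ∂μ) +
        (1 - q) * (∫ x, max (trMax μ T φ x) L ^ q ∂μ) - σ ^ q * ∫ x, φ x ^ q ∂μ := by
  have hIP := (integrable_mul_max_trMax_rpow T hq1.le hL hφi).const_mul (q * σ)
  have hIG := (integrable_max_trMax_rpow T hq0 hq1 hL hφm hφ0 hφi).const_mul (1 - q)
  have hIφ := (integrable_rpow_of_nonneg hq0.le hq1.le hφm hφ0 hφi).const_mul (σ ^ q)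
  have hkey := integral_max_trMax_rpow_le T hq0 hq1 hL hφm hφ0 hφi
  have hIPG : Integrable (fun x => q * σ * (φ x * max (trMax μ T φ x) L ^ (q - 1)) +
      (1 - q) * max (trMax μ T φ x) L ^ q) μ := hIP.add hIG
  rw [amgmGap_max_trMax_eq T hσ hφ0, integral_sub hIPG hIφ, integral_add hIP hIG,
    integral_const_mul, integral_const_mul, integral_const_mul]
  nlinarith [mul_le_mul_of_nonneg_left hkey hσ]

lemma integral_abs_max_trMax_sub_rpow_le [IsFiniteMeasure μ] (hq0 : 0 < q) (hq1 : q < 1)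
    (hL : 0 < L) (hσ : 0 ≤ σ) (hφm : Measurable φ) (hφ0 : ∀ x, 0 ≤ φ x) (hφi : Integrable φ μ)
    {ε C : ℝ} (hC : ∀ κ r, 0 < κ → 0 ≤ r → |κ - r| ^ q ≤ ε * κ ^ q + C * amgmGap q κ r) :
    ∫ x, |max (trMax μ T φ x) L - σ * φ x| ^ q ∂μ ≤
      ε * (∫ x, max (trMax μ T φ x) L ^ q ∂μ) +
        C * ∫ x, amgmGap q (max (trMax μ T φ x) L) (σ * φ x) ∂μ := by
  have hIG := (integrable_max_trMax_rpow T hq0 hq1 hL hφm hφ0 hφi).const_mul ε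
  have hIgap := (integrable_amgmGap_max_trMax T hq0 hq1 hL hσ hφm hφ0 hφi).const_mul C
  rw [← integral_const_mul, ← integral_const_mul, ← integral_add hIG hIgap]
  exact integral_mono (integrable_abs_max_trMax_sub_rpow T hq0 hq1 hL hσ hφm hφ0 hφi)
    (hIG.add hIgap) fun x =>
      hC _ _ (hL.trans_le (le_max_right _ _)) (mul_nonneg hσ (hφ0 x))

end Extremal

lemma tendsto_zero_of_forall_le_mul_add_mul {a b c : ℕ → ℝ} {B : ℝ} (ha : ∀ n, 0 ≤ a n)
    (hb : Tendsto b atTop (nhds B)) (hc : Tendsto c atTop (nhds 0))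
    (h : ∀ ε > 0, ∃ C, ∀ n, a n ≤ ε * b n + C * c n) : Tendsto a atTop (nhds 0) := by
  refine tendsto_order.2 ⟨fun η hη => Eventually.of_forall fun n => hη.trans_le (ha n),
    fun η hη => ?_⟩
  set ε := η / (2 * (|B| + 1))
  have hε : 0 < ε := by positivity
  have hεB : ε * B < η := by
    calc ε * B ≤ ε * |B| := mul_le_mul_of_nonneg_left (le_abs_self B) hε.le
      _ < η := by
        rw [div_mul_eq_mul_div, div_lt_iff₀ (by positivity)]
        nlinarith [abs_nonneg B]
  obtain ⟨C, hC⟩ := h ε hε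
  have hlim : Tendsto (fun n => ε * b n + C * c n) atTop (nhds (ε * B)) := by
    simpa using (hb.const_mul ε).add (hc.const_mul C)
  exact (hlim.eventually_lt_const hεB).mono fun n hn => (hC n).trans_lt hn

section ExtremalSequences

variable {μ : Measure X} [IsProbabilityMeasure μ] (T : DTree X μ) {q f h L σ : ℝ}
  {φ : ℕ → X → ℝ}

lemma tendsto_integral_amgmGap_max_trMax (hq0 : 0 < q) (hq1 : q < 1) (hL : 0 < L) (hσ : 0 < σ)
    (hσH : h * funH q σ = (1 - q) * L ^ q + q * L ^ (q - 1) * f) (hm : ∀ n, Measurable (φ n))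
    (h0 : ∀ n x, 0 ≤ φ n x) (hint : ∀ n, Integrable (φ n) μ) (hf : ∀ n, ∫ x, φ n x ∂μ = f)
    (hhn : ∀ n, ∫ x, φ n x ^ q ∂μ = h)
    (hlim : Tendsto (fun n => ∫ x, max (trMax μ T (φ n) x) L ^ q ∂μ) atTop (nhds (h * σ ^ q))) :
    Tendsto (fun n => ∫ x, amgmGap q (max (trMax μ T (φ n) x) L) (σ * φ n x) ∂μ) atTop
      (nhds 0) := by
  have hσq : σ * σ ^ (q - 1) = σ ^ q := by
    rw [← Real.rpow_one_add' hσ.le (by linarith), add_sub_cancel]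
  have hbound := (((tendsto_const_nhds (x := (1 - q) * L ^ q + q * L ^ (q - 1) * f)).sub
    (hlim.const_mul (1 - q))).const_mul σ).add (hlim.const_mul (1 - q)) |>.sub
    (tendsto_const_nhds (x := σ ^ q * h))
  rw [← hσH, funH] at hbound
  refine squeeze_zero (fun n => integral_nonneg fun x => amgmGap_nonneg hq0.le hq1.le
      (hL.trans_le (le_max_right _ _)) (mul_nonneg hσ.le (h0 n x)))
    (fun n => (integral_amgmGap_max_trMax_le T hq0 hq1 hL hσ.le (hm n) (h0 n) (hint n)).trans
      (by rw [hf n, hhn n, ← hσH, funH])) ?_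
  -- `H_q(σ) h = (1 - q) L ^ q + q L ^ (q - 1) f` is exactly what makes the limit of the bound vanish
  convert hbound using 2
  linear_combination (-h * q) * hσq

lemma tendsto_integral_abs_max_trMax_sub_rpow (hq0 : 0 < q) (hq1 : q < 1) (hL : 0 < L)
    (hσ : 0 < σ) (hσH : h * funH q σ = (1 - q) * L ^ q + q * L ^ (q - 1) * f)
    (hm : ∀ n, Measurable (φ n)) (h0 : ∀ n x, 0 ≤ φ n x) (hint : ∀ n, Integrable (φ n) μ)
    (hf : ∀ n, ∫ x, φ n x ∂μ = f) (hhn : ∀ n, ∫ x, φ n x ^ q ∂μ = h)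
    (hlim : Tendsto (fun n => ∫ x, max (trMax μ T (φ n) x) L ^ q ∂μ) atTop (nhds (h * σ ^ q))) :
    Tendsto (fun n => ∫ x, |max (trMax μ T (φ n) x) L - σ * φ n x| ^ q ∂μ) atTop (nhds 0) := by
  refine tendsto_zero_of_forall_le_mul_add_mul (fun n => integral_nonneg fun x => by positivity)
    hlim (tendsto_integral_amgmGap_max_trMax T hq0 hq1 hL hσ hσH hm h0 hint hf hhn hlim)
    fun ε hε => ?_
  obtain ⟨C, hC⟩ := exists_abs_sub_rpow_le hq0 hq1 hε
  exact ⟨C, fun n =>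
    integral_abs_max_trMax_sub_rpow_le T hq0 hq1 hL hσ.le (hm n) (h0 n) (hint n) hC⟩

lemma tendsto_integral_max_trMax_rpow (hq0 : 0 < q) (hq1 : q < 1) (hL : 0 < L) (hσ : 0 ≤ σ)
    (hm : ∀ n, Measurable (φ n)) (h0 : ∀ n x, 0 ≤ φ n x) (hint : ∀ n, Integrable (φ n) μ)
    (hhn : ∀ n, ∫ x, φ n x ^ q ∂μ = h)
    (hlim : Tendsto (fun n => ∫ x, |max (trMax μ T (φ n) x) L - σ * φ n x| ^ q ∂μ) atTop
      (nhds 0)) :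
    Tendsto (fun n => ∫ x, max (trMax μ T (φ n) x) L ^ q ∂μ) atTop (nhds (h * σ ^ q)) := by
  have hdiff := squeeze_zero_norm
    (f := fun n => ∫ x, max (trMax μ T (φ n) x) L ^ q ∂μ - σ ^ q * h) (fun n => by
      simpa only [Real.norm_eq_abs, hhn n] using
        abs_integral_max_trMax_rpow_sub_le T hq0 hq1 hL hσ (hm n) (h0 n) (hint n)) hlim
  simpa [mul_comm] using hdiff.add_const (σ ^ q * h)

end ExtremalSequences

theorem statement1_general {X : Type*} [MeasurableSpace X] (μ : Measure X)
    [IsProbabilityMeasure μ] (T : DTree X μ)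
    (q f h L : ℝ) (hq : q ∈ Set.Ioo (0 : ℝ) 1) (hh : 0 < h) (hhf : h ≤ f ^ q)
    (hL : f ≤ L) (φ : ℕ → X → ℝ) (hm : ∀ n, Measurable (φ n))
    (h0 : ∀ n x, 0 ≤ φ n x) (hint : ∀ n, Integrable (φ n) μ)
    (hf : ∀ n, (∫ x, φ n x ∂μ) = f) (hhn : ∀ n, (∫ x, φ n x ^ q ∂μ) = h) :
    Tendsto (fun n => ∫ x, (max (trMax μ T (φ n) x) L) ^ q ∂μ) atTop
        (nhds (h * bellC q f h L)) ↔
      Tendsto (fun n =>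
          ∫ x, |max (trMax μ T (φ n) x) L - bellC q f h L ^ (1 / q) * φ n x| ^ q ∂μ)
        atTop (nhds 0) := by
  obtain ⟨hq0, hq1⟩ := hq
  have hf0 : 0 < f := by
    by_contra! hf0
    have : f = 0 := le_antisymm hf0 (hf 0 ▸ integral_nonneg (h0 0))
    rw [this, Real.zero_rpow hq0.ne'] at hhf
    linarith
  have hL0 : 0 < L := hf0.trans_le hL
  have hhB : h ≤ (1 - q) * L ^ q + q * L ^ (q - 1) * f := by
    linarith [rpow_le_mul_add_mul hq0.le hq1.le hL0 hf0.le]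
  obtain ⟨hσ1, hσH⟩ := funH_invFunOn hq0 hq1 ((one_le_div hh).2 hhB)
  set σ := Function.invFunOn (funH q) (Ici 1) (((1 - q) * L ^ q + q * L ^ (q - 1) * f) / h)
  have hσ0 : 0 < σ := zero_lt_one.trans_le hσ1
  rw [eq_div_iff hh.ne', mul_comm] at hσH
  have hc : bellC q f h L = σ ^ q := rfl
  rw [hc, ← Real.rpow_mul hσ0.le, mul_one_div_cancel hq0.ne', Real.rpow_one]
  exact ⟨tendsto_integral_abs_max_trMax_sub_rpow T hq0 hq1 hL0 hσ0 hσH hm h0 hint hf hhn,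
    tendsto_integral_max_trMax_rpow T hq0 hq1 hL0 hσ0.le hm h0 hint hhn⟩

/-- characterization of the extremal sequences. -/
theorem statement1 {X : Type*} [MeasurableSpace X] (μ : Measure X)
    [IsProbabilityMeasure μ] [NullSingletonClass μ] (T : DTree X μ)
    (q f h L : ℝ) (hq : q ∈ Set.Ioo (0 : ℝ) 1) (hh : 0 < h) (hhf : h ≤ f ^ q)
    (hL : f ≤ L) (φ : ℕ → X → ℝ) (hm : ∀ n, Measurable (φ n))
    (h0 : ∀ n x, 0 ≤ φ n x) (hint : ∀ n, Integrable (φ n) μ)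
    (hf : ∀ n, (∫ x, φ n x ∂μ) = f) (hhn : ∀ n, (∫ x, φ n x ^ q ∂μ) = h) :
    Tendsto (fun n => ∫ x, (max (trMax μ T (φ n) x) L) ^ q ∂μ) atTop
        (nhds (h * bellC q f h L)) ↔
      Tendsto (fun n =>
          ∫ x, |max (trMax μ T (φ n) x) L - bellC q f h L ^ (1 / q) * φ n x| ^ q ∂μ)
        atTop (nhds 0) :=
  statement1_general μ T q f h L hq hh hhf hL φ hm h0 hint hf hhn

end
end

section
/- Let (X,μ) be a nonatomic probability space, T a tree on X, and φ a T-good function. If I, J ∈ S_φ, then either A(φ,J) ∩ I = ∅ or J ⊆ I. -/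
open MeasureTheory Filter Set

noncomputable section

variable {X : Type*} [MeasurableSpace X]

namespace DTree

variable {μ : Measure X} (T : DTree X μ) {lvl : ℕ → Set (Set X)}

lemma mem_of_mem_level (hmem : T.mem = ⋃ m, lvl m) {m : ℕ} {K : Set X} (hK : K ∈ lvl m) :
    K ∈ T.mem :=
  hmem ▸ mem_iUnion.mpr ⟨m, hK⟩

lemma pairwise_disjoint_level_s4 (hl0 : lvl 0 = {univ})
    (hsucc : ∀ m, lvl (m + 1) = ⋃ I ∈ lvl m, T.child I) (hmem : T.mem = ⋃ m, lvl m)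
    (m : ℕ) :
    (lvl m).Pairwise Disjoint := by
  induction m with
  | zero => rw [hl0]; exact pairwise_singleton _ _
  | succ m ih =>
    intro A hA B hB hAB
    rw [hsucc] at hA hB
    simp only [mem_iUnion] at hA hB
    obtain ⟨P, hP, hAP⟩ := hA
    obtain ⟨Q, hQ, hBQ⟩ := hB
    have hPmem := T.mem_of_mem_level hmem hP
    have hQmem := T.mem_of_mem_level hmem hQ
    by_cases hPQ : P = Q
    · subst hPQ
      exact T.child_disj P hPmem hAP hBQ hAB
    · exact (ih hP hQ hPQ).mono (T.child_sub P hPmem A hAP) (T.child_sub Q hQmem B hBQ)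

lemma exists_level_superset_s4 (hsucc : ∀ m, lvl (m + 1) = ⋃ I ∈ lvl m, T.child I)
    (hmem : T.mem = ⋃ m, lvl m) (m k : ℕ) {K : Set X} (hK : K ∈ lvl (m + k)) :
    ∃ P ∈ lvl m, K ⊆ P := by
  induction k generalizing K with
  | zero => exact ⟨K, hK, subset_rfl⟩
  | succ k ih =>
    rw [← add_assoc, hsucc] at hK
    simp only [mem_iUnion] at hK
    obtain ⟨P, hP, hKP⟩ := hK
    obtain ⟨Q, hQ, hPQ⟩ := ih hP
    exact ⟨Q, hQ, (T.child_sub P (T.mem_of_mem_level hmem hP) K hKP).trans hPQ⟩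

lemma subset_of_mem_level_of_le (hl0 : lvl 0 = {univ})
    (hsucc : ∀ m, lvl (m + 1) = ⋃ I ∈ lvl m, T.child I) (hmem : T.mem = ⋃ m, lvl m)
    {m n : ℕ} (hmn : m ≤ n) {A B : Set X} (hA : A ∈ lvl m) (hB : B ∈ lvl n)
    {x : X} (hxA : x ∈ A) (hxB : x ∈ B) : B ⊆ A := by
  obtain ⟨k, rfl⟩ := Nat.exists_eq_add_of_le hmn
  obtain ⟨P, hP, hBP⟩ := T.exists_level_superset_s4 hsucc hmem m k hB
  obtain rfl : A = P := by
    by_contra hAP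
    exact disjoint_left.mp (T.pairwise_disjoint_level_s4 hl0 hsucc hmem m hA hP hAP) hxA (hBP hxB)
  exact hBP

lemma nested {I J : Set X} (hI : I ∈ T.mem) (hJ : J ∈ T.mem) {x : X} (hxI : x ∈ I)
    (hxJ : x ∈ J) : I ⊆ J ∨ J ⊆ I := by
  obtain ⟨lvl, hl0, hsucc, hmem, -⟩ := T.generated
  rw [hmem] at hI hJ
  obtain ⟨m, hIm⟩ := mem_iUnion.mp hI
  obtain ⟨n, hJn⟩ := mem_iUnion.mp hJ
  rcases le_total m n with h | h
  · exact Or.inr (T.subset_of_mem_level_of_le hl0 hsucc hmem h hIm hJn hxI hxJ)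
  · exact Or.inl (T.subset_of_mem_level_of_le hl0 hsucc hmem h hJn hIm hxJ hxI)

end DTree

section Averages

variable {μ : Measure X} {φ : X → ℝ}

lemma trMax_of_nonneg (T : DTree X μ) (h0 : ∀ x, 0 ≤ φ x) (x : X) :
    trMax μ T φ x = sSup {r : ℝ | ∃ I ∈ T.mem, x ∈ I ∧ r = trAvg μ φ I} := by
  simp only [trMax, abs_of_nonneg (h0 _)]

lemma setIntegral_eq_zero_of_trAvg_eq_zero [IsFiniteMeasure μ] {I : Set X} (hI : 0 < μ I)
    (hφ : trAvg μ φ I = 0) : ∫ x in I, φ x ∂μ = 0 :=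
  (mul_eq_zero.mp hφ).resolve_left <|
    inv_ne_zero (ENNReal.toReal_pos hI.ne' (measure_ne_top μ I)).ne'

lemma trAvg_le_of_subset [IsFiniteMeasure μ] (h0 : ∀ x, 0 ≤ φ x) (hint : Integrable φ μ)
    {I L : Set X} (hI : 0 < μ I) (hL : MeasurableSet L) (hIL : I ⊆ L) :
    trAvg μ φ L ≤ (μ I).toReal⁻¹ * ∫ x, φ x ∂μ := by
  have hint_le : ∫ x in L, φ x ∂μ ≤ ∫ x, φ x ∂μ :=
    setIntegral_le_integral hint (Eventually.of_forall h0)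
  have hinv_le : (μ L).toReal⁻¹ ≤ (μ I).toReal⁻¹ :=
    inv_anti₀ (ENNReal.toReal_pos hI.ne' (measure_ne_top μ I))
      (ENNReal.toReal_mono (measure_ne_top μ L) (measure_mono hIL))
  exact mul_le_mul hinv_le hint_le (setIntegral_nonneg hL fun x _ => h0 x) (by positivity)

lemma trAvg_nonpos_of_subset (h0 : ∀ x, 0 ≤ φ x) (hint : Integrable φ μ) {I L : Set X}
    (hLI : L ⊆ I) (hI0 : ∫ x in I, φ x ∂μ = 0) : trAvg μ φ L ≤ 0 := by
  have hint_le : ∫ x in L, φ x ∂μ ≤ 0 :=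
    hI0 ▸ setIntegral_mono_set hint.integrableOn
      (ae_restrict_of_ae (Eventually.of_forall h0)) hLI.eventuallyLE
  exact mul_nonpos_of_nonneg_of_nonpos (inv_nonneg.mpr ENNReal.toReal_nonneg) hint_le

/-- Averages over the chain of tree elements through `y` can only blow up along shrinking
elements, and those are trapped inside `I`, where `φ` has integral zero. -/
lemma bddAbove_trAvg_of_setIntegral_eq_zero [IsFiniteMeasure μ] (T : DTree X μ)
    (h0 : ∀ x, 0 ≤ φ x) (hint : Integrable φ μ) {y : X} {I : Set X} (hI : I ∈ T.mem)
    (hyI : y ∈ I) (hI0 : ∫ x in I, φ x ∂μ = 0) :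
    BddAbove {r : ℝ | ∃ L ∈ T.mem, y ∈ L ∧ r = trAvg μ φ L} := by
  refine ⟨max 0 ((μ I).toReal⁻¹ * ∫ x, φ x ∂μ), ?_⟩
  rintro r ⟨L, hL, hyL, rfl⟩
  rcases T.nested hI hL hyI hyL with hIL | hLI
  · exact le_max_of_le_right (trAvg_le_of_subset h0 hint (T.pos I hI) (T.meas L hL) hIL)
  · exact le_max_of_le_left (trAvg_nonpos_of_subset h0 hint hLI hI0)

/-- The supremum defining `trMax` is a genuine (bounded) one as soon as it is attained:
otherwise it would be the junk value `0`, forcing `∫_I φ = 0` and hence boundedness. -/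
lemma trAvg_le_trMax_of_trMax_eq [IsFiniteMeasure μ] (T : DTree X μ) (h0 : ∀ x, 0 ≤ φ x)
    (hint : Integrable φ μ) {y : X} {I : Set X} (hI : I ∈ T.mem) (hyI : y ∈ I)
    (hmax : trMax μ T φ y = trAvg μ φ I) {K : Set X} (hK : K ∈ T.mem) (hyK : y ∈ K) :
    trAvg μ φ K ≤ trMax μ T φ y := by
  rw [trMax_of_nonneg T h0] at hmax ⊢
  by_cases hb : BddAbove {r : ℝ | ∃ L ∈ T.mem, y ∈ L ∧ r = trAvg μ φ L}
  · exact le_csSup hb ⟨K, hK, hyK, rfl⟩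
  · rw [Real.sSup_of_not_bddAbove hb] at hmax
    exact absurd (bddAbove_trAvg_of_setIntegral_eq_zero T h0 hint hI hyI
      (setIntegral_eq_zero_of_trAvg_eq_zero (T.pos I hI) hmax.symm)) hb

end Averages

/-- `I` and `J` are nested through `x`; if `I ⊆ J`, both averages equal the maximal function
at `x` and at `y`, so the maximality of `I_φ(y) = I` gives `J ⊆ I`. -/
lemma subset_of_mem_trA_of_mem_inter {μ : Measure X} [IsFiniteMeasure μ] (T : DTree X μ)
    {φ : X → ℝ} (h0 : ∀ x, 0 ≤ φ x) (hint : Integrable φ μ) {I J : Set X} {x y : X}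
    (hx : x ∈ trA μ T φ J ∩ I) (hy : y ∈ trA μ T φ I) : J ⊆ I := by
  obtain ⟨⟨-, hJ, hxJ, hmaxJ, -⟩, hxI⟩ := hx
  obtain ⟨-, hI, hyI, hmaxI, hmaxlI⟩ := hy
  rcases T.nested hI hJ hxI hxJ with hIJ | hJI
  · have hIJ_avg : trAvg μ φ I ≤ trAvg μ φ J :=
      hmaxJ ▸ trAvg_le_trMax_of_trMax_eq T h0 hint hJ hxJ hmaxJ hI hxI
    have hJI_avg : trAvg μ φ J ≤ trAvg μ φ I :=
      hmaxI ▸ trAvg_le_trMax_of_trMax_eq T h0 hint hI hyI hmaxI hJ (hIJ hyI)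
    exact hmaxlI J hJ (hIJ hyI) (by rw [hmaxI, le_antisymm hJI_avg hIJ_avg])
  · exact hJI

theorem statement4_general {X : Type*} [MeasurableSpace X] (μ : Measure X)
    [IsProbabilityMeasure μ] (T : DTree X μ)
    (φ : X → ℝ) (h0 : ∀ x, 0 ≤ φ x) (hint : Integrable φ μ)
    (I J : Set X) (hI : I ∈ trS μ T φ) :
    trA μ T φ J ∩ I = ∅ ∨ J ⊆ I := by
  rw [or_iff_not_imp_left, ← not_nonempty_iff_eq_empty, not_not]
  rintro ⟨x, hx⟩
  rcases hI with ⟨-, hIpos⟩ | rfl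
  · obtain ⟨y, hy⟩ := nonempty_of_measure_ne_zero hIpos.ne'
    exact subset_of_mem_trA_of_mem_inter T h0 hint hx hy
  · exact subset_univ J

/-- if `I, J ∈ S_φ` then either `A(φ,J) ∩ I = ∅` or `J ⊆ I`. -/
theorem statement4 {X : Type*} [MeasurableSpace X] (μ : Measure X)
    [IsProbabilityMeasure μ] [NullSingletonClass μ] (T : DTree X μ)
    (φ : X → ℝ) (h0 : ∀ x, 0 ≤ φ x) (hint : Integrable φ μ) (hgood : TGood μ T φ)
    (I J : Set X) (hI : I ∈ trS μ T φ) (hJ : J ∈ trS μ T φ) :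
    trA μ T φ J ∩ I = ∅ ∨ J ⊆ I :=
  statement4_general μ T φ h0 hint I J hI

end
end

section
/- Let q ∈ (0,1), k ∈ (0,1), and λ > 1 be fixed. Then the equation H_q( x(1−k)/(1−kx) ) = λ·H_q(x) (in the unknown x with 0 < x < 1/k, where H_q(z) = (1−q)z^q + q z^{q−1}) has a unique solution x = X_λ(k) in the interval (1, 1/k); moreover it has a solution in the interval (0,1) if and only if λ < (1−k)^{q−1}, and in that case this solution is also unique. -/
/-!
Since `H_q(z) = z^(q-1) (q + (1-q) z)`, the quotient `H_q(x(1-k)/(1-kx)) / H_q(x)` is the explicit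
function `hRatio q k x`, whose derivative on `[0, 1/k)` is a positive multiple of `x - 1`. Hence
`hRatio q k` decreases from `(1-k)^(q-1)` at `0` to `1` at `1` and then increases to `+∞` as
`x → 1/k`; the intermediate value theorem and strict monotonicity give the solutions of
`hRatio q k x = λ`.
-/

open MeasureTheory Filter Set

noncomputable section

open Topology

lemma Set.InjOn.existsUnique_of_exists {α β : Type*} {f : α → β} {s : Set α} {b : β}
    (hf : InjOn f s) (h : ∃ x ∈ s, f x = b) : ∃! x, x ∈ s ∧ f x = b :=
  let ⟨x, hx, hfx⟩ := h
  ⟨x, ⟨hx, hfx⟩, fun _ hy => hf hy.1 hx (hy.2.trans hfx.symm)⟩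

lemma StrictMonoOn.existsUnique_eq_of_tendsto_atTop {f : ℝ → ℝ} {a b l : ℝ} (hab : a < b)
    (hf : StrictMonoOn f (Ico a b)) (hcont : ContinuousOn f (Ico a b))
    (htop : Tendsto f (𝓝[<] b) atTop) (hl : f a < l) : ∃! x, x ∈ Ioo a b ∧ f x = l := by
  obtain ⟨c, hlc, hc⟩ := ((htop.eventually_gt_atTop l).and (Ioo_mem_nhdsLT hab)).exists
  have hsub : Icc a c ⊆ Ico a b := Icc_subset_Ico_right hc.2
  refine (hf.injOn.mono Ioo_subset_Ico_self).existsUnique_of_exists ?_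
  obtain ⟨x, hx, hfx⟩ := intermediate_value_Ioo hc.1.le (hcont.mono hsub) ⟨hl, hlc⟩
  exact ⟨x, ⟨hx.1, hx.2.trans hc.2⟩, hfx⟩

lemma StrictAntiOn.exists_mem_Ioo_eq_iff {f : ℝ → ℝ} {a b l : ℝ} (hab : a ≤ b)
    (hf : StrictAntiOn f (Icc a b)) (hcont : ContinuousOn f (Icc a b)) :
    (∃ x ∈ Ioo a b, f x = l) ↔ f b < l ∧ l < f a := by
  refine ⟨?_, fun h => intermediate_value_Ioo' hab hcont h⟩
  rintro ⟨x, hx, rfl⟩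
  exact ⟨hf (Ioo_subset_Icc_self hx) (right_mem_Icc.2 hab) hx.2,
    hf (left_mem_Icc.2 hab) (Ioo_subset_Icc_self hx) hx.1⟩

lemma funH_eq_rpow_mul {q z : ℝ} (hz : 0 < z) : funH q z = z ^ (q - 1) * (q + (1 - q) * z) := by
  have hzq : z ^ q = z ^ (q - 1) * z := by
    rw [← Real.rpow_add_one hz.ne']; norm_num
  rw [funH, hzq]; ring

lemma add_one_sub_mul_pos {q z : ℝ} (hq0 : 0 < q) (hq1 : q ≤ 1) (hz : 0 ≤ z) :
    0 < q + (1 - q) * z :=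
  add_pos_of_pos_of_nonneg hq0 (mul_nonneg (sub_nonneg.2 hq1) hz)

lemma funH_pos {q z : ℝ} (hq0 : 0 < q) (hq1 : q ≤ 1) (hz : 0 < z) : 0 < funH q z := by
  rw [funH_eq_rpow_mul hz]
  exact mul_pos (Real.rpow_pos_of_pos hz _) (add_one_sub_mul_pos hq0 hq1 hz.le)

def hRatio (q k x : ℝ) : ℝ :=
  (1 - k) ^ (q - 1) * (1 - k * x) ^ (-q) * ((q + (1 - q - k) * x) / (q + (1 - q) * x))

lemma funH_mobius_eq {q k x : ℝ} (hq0 : 0 < q) (hq1 : q ≤ 1) (hk : k < 1) (hx : 0 < x)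
    (hkx : k * x < 1) :
    funH q (x * (1 - k) / (1 - k * x)) = hRatio q k x * funH q x := by
  have hkx' : 0 < 1 - k * x := by linarith
  have hk' : 0 < 1 - k := by linarith
  have hD := add_one_sub_mul_pos hq0 hq1 hx.le
  rw [funH_eq_rpow_mul (by positivity), funH_eq_rpow_mul hx, hRatio,
    Real.div_rpow (by positivity) hkx'.le, Real.mul_rpow hx.le hk'.le, Real.rpow_neg hkx'.le,
    Real.rpow_sub hkx', Real.rpow_one]
  have hpow := Real.rpow_pos_of_pos hkx' q
  generalize q + (1 - q) * x = D at hD ⊢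
  field_simp
  ring

lemma funH_mobius_eq_mul_iff {q k x : ℝ} (l : ℝ) (hq0 : 0 < q) (hq1 : q ≤ 1) (hk : k < 1)
    (hx : 0 < x) (hkx : k * x < 1) :
    funH q (x * (1 - k) / (1 - k * x)) = l * funH q x ↔ hRatio q k x = l := by
  rw [funH_mobius_eq hq0 hq1 hk hx hkx]
  exact mul_left_inj' (funH_pos hq0 hq1 hx).ne'

lemma hasDerivAt_hRatio {q k x : ℝ} (hkx : k * x < 1) (hD : q + (1 - q) * x ≠ 0) :
    HasDerivAt (hRatio q k)
      ((1 - k) ^ (q - 1) * (q * k) * (1 - k * x) ^ (-q - 1) * (1 - q) *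
        ((1 - q - k) * x + (1 + q)) / (q + (1 - q) * x) ^ 2 * (x - 1)) x := by
  have hkx' : 0 < 1 - k * x := by linarith
  have d1 : HasDerivAt (fun y : ℝ => (1 - k * y) ^ (-q)) (q * k * (1 - k * x) ^ (-q - 1)) x := by
    have := ((hasDerivAt_id' x).const_mul k).const_sub 1 |>.rpow_const (p := -q) (Or.inl hkx'.ne')
    convert this using 1
    ring
  have d2 : HasDerivAt (fun y : ℝ => (q + (1 - q - k) * y) / (q + (1 - q) * y))
      (((1 - q - k) * (q + (1 - q) * x) - (q + (1 - q - k) * x) * (1 - q)) /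
        (q + (1 - q) * x) ^ 2) x := by
    have h1 : HasDerivAt (fun y : ℝ => q + (1 - q - k) * y) (1 - q - k) x := by
      simpa using ((hasDerivAt_id x).const_mul (1 - q - k)).const_add q
    have h2 : HasDerivAt (fun y : ℝ => q + (1 - q) * y) (1 - q) x := by
      simpa using ((hasDerivAt_id x).const_mul (1 - q)).const_add q
    exact h1.div h2 hD
  refine ((d1.const_mul ((1 - k) ^ (q - 1))).mul d2).congr_deriv ?_
  rw [show (1 - k * x) ^ (-q) = (1 - k * x) ^ (-q - 1) * (1 - k * x) by
    rw [← Real.rpow_add_one hkx'.ne']; norm_num]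
  field_simp
  ring

lemma exists_pos_hasDerivAt_hRatio {q k x : ℝ} (hq0 : 0 < q) (hq1 : q < 1) (hk0 : 0 < k)
    (hk1 : k < 1) (hx : 0 ≤ x) (hkx : k * x < 1) :
    ∃ c, 0 < c ∧ HasDerivAt (hRatio q k) (c * (x - 1)) x := by
  have hD := add_one_sub_mul_pos hq0 hq1.le hx
  -- `(1 - q - k) x + (1 + q) = (1 - k x) + (1 - q) x + q`
  have hnum : 0 < (1 - q - k) * x + (1 + q) := by nlinarith
  refine ⟨_, ?_, hasDerivAt_hRatio hkx hD.ne'⟩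
  have := Real.rpow_pos_of_pos (sub_pos.2 hk1) (q - 1)
  have := Real.rpow_pos_of_pos (sub_pos.2 hkx) (-q - 1)
  have := sub_pos.2 hq1
  positivity

lemma continuousOn_hRatio {q k : ℝ} (hq0 : 0 < q) (hq1 : q < 1) (hk0 : 0 < k) (hk1 : k < 1) :
    ContinuousOn (hRatio q k) (Ico 0 (1 / k)) := by
  intro x hx
  obtain ⟨c, -, hd⟩ :=
    exists_pos_hasDerivAt_hRatio hq0 hq1 hk0 hk1 hx.1 ((lt_div_iff₀' hk0).1 hx.2)
  exact hd.continuousAt.continuousWithinAt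

lemma strictAntiOn_hRatio {q k : ℝ} (hq0 : 0 < q) (hq1 : q < 1) (hk0 : 0 < k) (hk1 : k < 1) :
    StrictAntiOn (hRatio q k) (Icc 0 1) := by
  refine strictAntiOn_of_deriv_neg (convex_Icc 0 1) ((continuousOn_hRatio hq0 hq1 hk0 hk1).mono
    (Icc_subset_Ico_right (one_lt_one_div hk0 hk1))) fun x hx => ?_
  rw [interior_Icc] at hx
  obtain ⟨c, hc, hd⟩ :=
    exists_pos_hasDerivAt_hRatio hq0 hq1 hk0 hk1 hx.1.le (by nlinarith [hx.2])
  rw [hd.deriv]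
  exact mul_neg_of_pos_of_neg hc (by linarith [hx.2])

lemma strictMonoOn_hRatio {q k : ℝ} (hq0 : 0 < q) (hq1 : q < 1) (hk0 : 0 < k) (hk1 : k < 1) :
    StrictMonoOn (hRatio q k) (Ico 1 (1 / k)) := by
  refine strictMonoOn_of_deriv_pos (convex_Ico 1 (1 / k))
    ((continuousOn_hRatio hq0 hq1 hk0 hk1).mono (Ico_subset_Ico_left zero_le_one)) fun x hx => ?_
  rw [interior_Ico] at hx
  obtain ⟨c, hc, hd⟩ := exists_pos_hasDerivAt_hRatio hq0 hq1 hk0 hk1 (by linarith [hx.1])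
    ((lt_div_iff₀' hk0).1 hx.2)
  rw [hd.deriv]
  exact mul_pos hc (by linarith [hx.1])

lemma hRatio_zero {q : ℝ} (k : ℝ) (hq : q ≠ 0) : hRatio q k 0 = (1 - k) ^ (q - 1) := by
  simp [hRatio, hq]

lemma hRatio_one (q : ℝ) {k : ℝ} (hk : k < 1) : hRatio q k 1 = 1 := by
  have hk' : 0 < 1 - k := sub_pos.2 hk
  rw [hRatio, mul_one, ← Real.rpow_add hk', show q - 1 + -q = -1 by ring, Real.rpow_neg_one]
  field_simp
  ring

lemma tendsto_hRatio_atTop {q k : ℝ} (hq0 : 0 < q) (hq1 : q < 1) (hk0 : 0 < k) (hk1 : k < 1) :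
    Tendsto (hRatio q k) (𝓝[<] (1 / k)) atTop := by
  have hk : k * (1 / k) = 1 := mul_one_div_cancel hk0.ne'
  have hgap : Tendsto (fun x => 1 - k * x) (𝓝[<] (1 / k)) (𝓝[>] 0) := by
    refine tendsto_nhdsWithin_of_tendsto_nhds_of_eventually_within _ ?_ ?_
    · have : Tendsto (fun x => 1 - k * x) (𝓝 (1 / k)) (𝓝 (1 - k * (1 / k))) :=
        (continuous_const.sub (continuous_const.mul continuous_id)).tendsto _
      rw [hk, sub_self] at this
      exact this.mono_left nhdsWithin_le_nhds
    · filter_upwards [self_mem_nhdsWithin] with x hx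
      exact sub_pos.2 ((lt_div_iff₀' hk0).1 hx)
  have hpow := (tendsto_rpow_neg_nhdsGT_zero (neg_lt_zero.2 hq0)).comp hgap
  have hD : q + (1 - q) * (1 / k) ≠ 0 := (add_one_sub_mul_pos hq0 hq1.le (by positivity)).ne'
  have hfrac : Tendsto (fun x => (q + (1 - q - k) * x) / (q + (1 - q) * x)) (𝓝[<] (1 / k))
      (𝓝 ((q + (1 - q - k) * (1 / k)) / (q + (1 - q) * (1 / k)))) :=
    (((by fun_prop : Continuous fun x : ℝ => q + (1 - q - k) * x).tendsto _).div
      ((by fun_prop : Continuous fun x : ℝ => q + (1 - q) * x).tendsto _) hD).mono_left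
        nhdsWithin_le_nhds
  have hlim : 0 < (q + (1 - q - k) * (1 / k)) / (q + (1 - q) * (1 / k)) := by
    have h1k := one_lt_one_div hk0 hk1
    apply div_pos <;> nlinarith
  exact (hpow.const_mul_atTop (Real.rpow_pos_of_pos (sub_pos.2 hk1) _)).atTop_mul_pos hlim hfrac

/-- unique solvability of `H_q(x(1-k)/(1-kx)) = λ H_q(x)` on `(1, 1/k)`,
and solvability on `(0,1)` iff `λ < (1-k)^(q-1)` (in which case uniquely). -/
theorem statement9 (q k l : ℝ) (hq : q ∈ Set.Ioo (0 : ℝ) 1)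
    (hk : k ∈ Set.Ioo (0 : ℝ) 1) (hl : 1 < l) :
    (∃! x : ℝ, x ∈ Set.Ioo 1 (1 / k) ∧
        funH q (x * (1 - k) / (1 - k * x)) = l * funH q x) ∧
    ((∃ x ∈ Set.Ioo (0 : ℝ) 1,
        funH q (x * (1 - k) / (1 - k * x)) = l * funH q x) ↔ l < (1 - k) ^ (q - 1)) ∧
    (l < (1 - k) ^ (q - 1) → ∃! x : ℝ, x ∈ Set.Ioo (0 : ℝ) 1 ∧
        funH q (x * (1 - k) / (1 - k * x)) = l * funH q x) := by
  obtain ⟨hq0, hq1⟩ := hq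
  obtain ⟨hk0, hk1⟩ := hk
  have h1k : 1 < 1 / k := one_lt_one_div hk0 hk1
  have hcont := continuousOn_hRatio hq0 hq1 hk0 hk1
  have hsmall : ∀ x ∈ Ioo (0 : ℝ) 1, funH q (x * (1 - k) / (1 - k * x)) = l * funH q x ↔
      hRatio q k x = l := fun x hx =>
    funH_mobius_eq_mul_iff l hq0 hq1.le hk1 hx.1 (by nlinarith [hx.1, hx.2])
  have hlarge : ∀ x ∈ Ioo 1 (1 / k), funH q (x * (1 - k) / (1 - k * x)) = l * funH q x ↔
      hRatio q k x = l := fun x hx =>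
    funH_mobius_eq_mul_iff l hq0 hq1.le hk1 (by linarith [hx.1]) ((lt_div_iff₀' hk0).1 hx.2)
  have hexists : (∃ x ∈ Ioo (0 : ℝ) 1, hRatio q k x = l) ↔ l < (1 - k) ^ (q - 1) := by
    rw [(strictAntiOn_hRatio hq0 hq1 hk0 hk1).exists_mem_Ioo_eq_iff zero_le_one
      (hcont.mono (Icc_subset_Ico_right h1k)), hRatio_zero k hq0.ne', hRatio_one q hk1]
    exact and_iff_right hl
  refine ⟨?_, (exists_congr fun x => and_congr_right (hsmall x)).trans hexists, fun hlt => ?_⟩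
  · rw [existsUnique_congr fun x => and_congr_right (hlarge x)]
    exact (strictMonoOn_hRatio hq0 hq1 hk0 hk1).existsUnique_eq_of_tendsto_atTop h1k
      (hcont.mono (Ico_subset_Ico_left zero_le_one)) (tendsto_hRatio_atTop hq0 hq1 hk0 hk1)
      ((hRatio_one q hk1).symm ▸ hl)
  · rw [existsUnique_congr fun x => and_congr_right (hsmall x)]
    have hinj := (strictAntiOn_hRatio hq0 hq1 hk0 hk1).injOn.mono Ioo_subset_Icc_self
    exact hinj.existsUnique_of_exists (hexists.2 hlt)

end
end
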